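/- arXiv:1106.3840 — 11 statements merged into one kernel-verified Lean document; each statement's English description precedes it below -/
import Mathlib

section
/- A topological space G is rectifiable if and only if there exist a point e ∈ G and continuous maps p : G × G → G and q : G × G → G such that for all x, y ∈ G one has p(x, q(x,y)) = y, q(x, p(x,y)) = y, and q(x,x) = e. -/
/-- A topological space `G` is rectifiable (there is a homeomorphism
`φ : G × G ≃ₜ G × G` and `e ∈ G` with `π₁ ∘ φ = π₁` and `φ(x,x) = (x,e)`)
iff there exist `e ∈ G` and continuous maps `p, q : G × G → G` with
`p(x, q(x,y)) = y`, `q(x, p(x,y)) = y` and `q(x,x) = e`. -/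
theorem rectifiable_iff_exists_p_q
    (G : Type*) [TopologicalSpace G] :
    (∃ φ : G × G ≃ₜ G × G, ∃ e : G,
        (∀ z : G × G, (φ z).1 = z.1) ∧ (∀ x : G, φ (x, x) = (x, e))) ↔
    (∃ e : G, ∃ p q : G × G → G, Continuous p ∧ Continuous q ∧
        (∀ x y : G, p (x, q (x, y)) = y) ∧
        (∀ x y : G, q (x, p (x, y)) = y) ∧
        (∀ x : G, q (x, x) = e)) := by
  constructor
  · rintro ⟨φ, e, hπ, hd⟩
    refine ⟨e, fun z => (φ.symm z).2, fun z => (φ z).2,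
      (map_continuous φ.symm).snd, (map_continuous φ).snd, ?_, ?_, ?_⟩
    · intro x y
      have h1 : (φ (x, y)) = (x, (φ (x, y)).2) := by
        ext
        · exact hπ (x, y)
        · rfl
      have := φ.symm_apply_apply (x, y)
      rw [h1] at this
      exact congrArg Prod.snd this
    · intro x y
      have hπ' : ∀ w : G × G, (φ.symm w).1 = w.1 := by
        intro w
        have := hπ (φ.symm w)
        rw [φ.apply_symm_apply] at this
        exact this.symm
      have h1 : (φ.symm (x, y)) = (x, (φ.symm (x, y)).2) := by
        ext
        · exact hπ' (x, y)
        · rfl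
      have := φ.apply_symm_apply (x, y)
      rw [h1] at this
      exact congrArg Prod.snd this
    · intro x
      exact congrArg Prod.snd (hd x)
  · rintro ⟨e, p, q, hp, hq, hpq, hqp, hdiag⟩
    refine ⟨⟨⟨fun z => (z.1, q z), fun z => (z.1, p z), ?_, ?_⟩, ?_, ?_⟩, e, ?_, ?_⟩
    · intro z; exact Prod.ext rfl (hpq z.1 z.2)
    · intro z; exact Prod.ext rfl (hqp z.1 z.2)
    · exact continuous_fst.prodMk hq
    · exact continuous_fst.prodMk hp
    · intro z; rfl
    · intro x; simp [hdiag x]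
end

section
/- Let G be a rectifiable space that is open π-nested at some point a ∈ G. Then G is open nested at every point; i.e., every point of G has a neighborhood base that is an open nest. -/
/-!
Since `q (u, u) = e` for every `u` and `q` is continuous and open, the sets `q '' (U ×ˢ U)`,
for `U` running through an open nest converging to `a`, form an open nest which is a local
base at `e = q (a, a)`. The translation `y ↦ p (x, y)` is a homeomorphism (with inverse
`y ↦ q (x, y)`) sending `e` to `x`, so it carries this nest to one at `x`.
-/

open Set Topology

section

variable {X Y : Type*} [TopologicalSpace X] [TopologicalSpace Y]

def IsOpenNestConvergingTo (S : Set (Set X)) (x : X) : Prop :=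
  (∀ U ∈ S, IsOpen U ∧ U.Nonempty) ∧ IsChain (· ⊆ ·) S ∧
    ∀ U : Set X, IsOpen U → x ∈ U → ∃ V ∈ S, V ⊆ U

def IsOpenNestBasisAt (S : Set (Set X)) (x : X) : Prop :=
  (∀ U ∈ S, IsOpen U ∧ x ∈ U) ∧ IsChain (· ⊆ ·) S ∧
    ∀ U : Set X, IsOpen U → x ∈ U → ∃ V ∈ S, V ⊆ U

theorem IsOpenNestBasisAt.image_homeomorph {S : Set (Set X)} {x : X}
    (hS : IsOpenNestBasisAt S x) (φ : X ≃ₜ Y) :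
    IsOpenNestBasisAt ((φ '' ·) '' S) (φ x) := by
  obtain ⟨hopen, hchain, hbase⟩ := hS
  refine ⟨?_, hchain.image_of_map_rel _ _ _ fun _ _ h => image_mono h, ?_⟩
  · rintro _ ⟨U, hU, rfl⟩
    exact ⟨φ.isOpenMap U (hopen U hU).1, mem_image_of_mem φ (hopen U hU).2⟩
  · intro O hO hxO
    obtain ⟨V, hV, hVO⟩ := hbase (φ ⁻¹' O) (hO.preimage φ.continuous) hxO
    exact ⟨φ '' V, mem_image_of_mem _ hV, image_subset_iff.2 hVO⟩

theorem IsOpenNestConvergingTo.isOpenNestBasisAt_image_prod {S : Set (Set X)} {a : X}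
    (hS : IsOpenNestConvergingTo S a) {f : X × X → Y} {e : Y} (hf : ContinuousAt f (a, a))
    (hfo : IsOpenMap f) (hfe : ∀ u, f (u, u) = e) :
    IsOpenNestBasisAt ((fun U => f '' U ×ˢ U) '' S) e := by
  obtain ⟨hopen, hchain, hbase⟩ := hS
  refine ⟨?_, hchain.image_of_map_rel _ _ _ fun _ _ h => image_mono (prod_mono h h), ?_⟩
  · rintro _ ⟨U, hU, rfl⟩
    obtain ⟨hUo, u, hu⟩ := hopen U hU
    exact ⟨hfo _ (hUo.prod hUo), hfe u ▸ mem_image_of_mem f (mk_mem_prod hu hu)⟩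
  · intro O hO heO
    have hO' : f ⁻¹' O ∈ 𝓝 (a, a) := hf.preimage_mem_nhds (hO.mem_nhds (hfe a ▸ heO))
    obtain ⟨A, hA, B, hB, hAB⟩ := mem_nhds_prod_iff.1 hO'
    obtain ⟨W, hWAB, hWo, haW⟩ := mem_nhds_iff.1 (Filter.inter_mem hA hB)
    obtain ⟨V, hV, hVW⟩ := hbase W hWo haW
    refine ⟨_, mem_image_of_mem _ hV, image_subset_iff.2 fun z hz => hAB ?_⟩
    exact ⟨(hWAB (hVW hz.1)).1, (hWAB (hVW hz.2)).2⟩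

end

def rectifiableTranslation {G : Type*} [TopologicalSpace G] {p q : G × G → G}
    (hp : Continuous p) (hq : Continuous q)
    (hpq : ∀ x y : G, p (x, q (x, y)) = y) (hqp : ∀ x y : G, q (x, p (x, y)) = y) (x : G) :
    G ≃ₜ G where
  toFun y := p (x, y)
  invFun y := q (x, y)
  left_inv := hqp x
  right_inv := hpq x
  continuous_toFun := hp.comp (Continuous.prodMk_right x)
  continuous_invFun := hq.comp (Continuous.prodMk_right x)

theorem rectifiable_open_pi_nested_implies_open_nested_general
    {G : Type*} [TopologicalSpace G] (e : G) (p q : G × G → G)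
    (hp : Continuous p) (hq : Continuous q)
    (hqo : IsOpenMap q)
    (hpq : ∀ x y : G, p (x, q (x, y)) = y)
    (hqp : ∀ x y : G, q (x, p (x, y)) = y)
    (hqe : ∀ x : G, q (x, x) = e)
    (a : G)
    (hnest : ∃ S : Set (Set G), S.Nonempty ∧
        (∀ U ∈ S, IsOpen U ∧ U.Nonempty) ∧ IsChain (· ⊆ ·) S ∧
        (∀ U : Set G, IsOpen U → a ∈ U → ∃ V ∈ S, V ⊆ U)) :
    ∀ x : G, ∃ S : Set (Set G),
        (∀ U ∈ S, IsOpen U ∧ x ∈ U) ∧ IsChain (· ⊆ ·) S ∧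
        (∀ U : Set G, IsOpen U → x ∈ U → ∃ V ∈ S, V ⊆ U) := by
  intro x
  obtain ⟨S, -, hS⟩ := hnest
  have hbase_e : IsOpenNestBasisAt _ e :=
    IsOpenNestConvergingTo.isOpenNestBasisAt_image_prod hS hq.continuousAt hqo hqe
  have hx : rectifiableTranslation hp hq hpq hqp x e = x := hqe x ▸ hpq x x
  exact ⟨_, hx ▸ hbase_e.image_homeomorph (rectifiableTranslation hp hq hpq hqp x)⟩

/-- If a rectifiable space `G` is open π-nested at some point `a` (there is an
open nest, i.e. a chain of nonempty open sets, converging to `a`), then `G` is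
open nested at every point: every point has a local base which is an open nest. -/
theorem rectifiable_open_pi_nested_implies_open_nested
    {G : Type*} [TopologicalSpace G] (e : G) (p q : G × G → G)
    (hp : Continuous p) (hq : Continuous q)
    (hpo : IsOpenMap p) (hqo : IsOpenMap q)
    (hpq : ∀ x y : G, p (x, q (x, y)) = y)
    (hqp : ∀ x y : G, q (x, p (x, y)) = y)
    (hqe : ∀ x : G, q (x, x) = e)
    (a : G)
    (hnest : ∃ S : Set (Set G), S.Nonempty ∧
        (∀ U ∈ S, IsOpen U ∧ U.Nonempty) ∧ IsChain (· ⊆ ·) S ∧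
        (∀ U : Set G, IsOpen U → a ∈ U → ∃ V ∈ S, V ⊆ U)) :
    ∀ x : G, ∃ S : Set (Set G),
        (∀ U ∈ S, IsOpen U ∧ x ∈ U) ∧ IsChain (· ⊆ ·) S ∧
        (∀ U : Set G, IsOpen U → x ∈ U → ∃ V ∈ S, V ⊆ U) :=
  rectifiable_open_pi_nested_implies_open_nested_general e p q hp hq hqo hpq hqp hqe a hnest
end

section
/- Let X be a topological space that is open nested at every point and suppose the character χ(x, X) equals a fixed cardinal κ for all x ∈ X. Then for any family γ of open sets of X with |γ| < κ, the intersection ⋂γ is open in X. -/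
/-!
Fix `x ∈ ⋂₀ γ` and a local base `B` at `x` that is a chain. Each `U ∈ γ` contains some
`V U ∈ B`. Since `B` is a chain, either one member of `B` lies inside every `V U`, and then
inside `⋂₀ γ`, or the sets `V U` are coinitial in `B` and hence form a local base at `x` of
cardinality at most `#γ < κ = χ(x, X)`, which is impossible.
-/

open Cardinal

/-- The character of a point `x` in a space `X`: the least cardinality of a
local base at `x`. -/
noncomputable def character (X : Type*) [TopologicalSpace X] (x : X) : Cardinal :=
  ⨅ B : {B : Set (Set X) // (∀ U ∈ B, IsOpen U ∧ x ∈ U) ∧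
      (∀ U : Set X, IsOpen U → x ∈ U → ∃ V ∈ B, V ⊆ U)}, #B.1

def IsLocalBaseAt {X : Type*} [TopologicalSpace X] (x : X) (B : Set (Set X)) : Prop :=
  (∀ U ∈ B, IsOpen U ∧ x ∈ U) ∧ ∀ U : Set X, IsOpen U → x ∈ U → ∃ V ∈ B, V ⊆ U

theorem IsChain.exists_forall_rel_or_forall_exists_rel {α ι : Type*} {r : α → α → Prop}
    [Std.Refl r] {B : Set α} (hB : IsChain r B) {f : ι → α} (hf : ∀ i, f i ∈ B) :
    (∃ w ∈ B, ∀ i, r w (f i)) ∨ ∀ w ∈ B, ∃ i, r (f i) w := by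
  refine or_iff_not_imp_left.2 fun hlower w hw => ?_
  obtain ⟨i, hi⟩ : ∃ i, ¬ r w (f i) := by
    by_contra! h
    exact hlower ⟨w, hw, h⟩
  exact ⟨i, (hB.total hw (hf i)).resolve_left hi⟩

section LocalBase

variable {X : Type*} [TopologicalSpace X] {x : X}

theorem character_le_mk {B : Set (Set X)} (hB : IsLocalBaseAt x B) : character X x ≤ #B :=
  ciInf_le' (fun B : {B : Set (Set X) // IsLocalBaseAt x B} => #B.1) ⟨B, hB⟩

theorem IsLocalBaseAt.range {ι : Type*} {B : Set (Set X)} (hB : IsLocalBaseAt x B)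
    {V : ι → Set X} (hV : ∀ i, V i ∈ B) (hcoinit : ∀ W ∈ B, ∃ i, V i ⊆ W) :
    IsLocalBaseAt x (Set.range V) := by
  refine ⟨Set.forall_mem_range.2 fun i => hB.1 _ (hV i), fun U hU hxU => ?_⟩
  obtain ⟨W, hWB, hWU⟩ := hB.2 U hU hxU
  obtain ⟨i, hiW⟩ := hcoinit W hWB
  exact ⟨V i, Set.mem_range_self i, hiW.trans hWU⟩

theorem sInter_mem_nhds_of_mk_lt_character {B : Set (Set X)} (hB : IsLocalBaseAt x B)
    (hchain : IsChain (· ⊆ ·) B) {γ : Set (Set X)} (hγ : ∀ U ∈ γ, IsOpen U)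
    (hcard : #γ < character X x) (hx : x ∈ ⋂₀ γ) : ⋂₀ γ ∈ nhds x := by
  choose V hVB hVsub using fun U : γ => hB.2 U (hγ U U.2) (hx U U.2)
  rcases hchain.exists_forall_rel_or_forall_exists_rel hVB with ⟨W, hWB, hW⟩ | hcoinit
  · have hWsub : W ⊆ ⋂₀ γ := fun y hy U hU => hVsub ⟨U, hU⟩ (hW ⟨U, hU⟩ hy)
    exact Filter.mem_of_superset ((hB.1 W hWB).1.mem_nhds (hB.1 W hWB).2) hWsub
  · have hle : character X x ≤ #γ :=
      (character_le_mk (hB.range hVB hcoinit)).trans mk_range_le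
    exact absurd hcard hle.not_gt

end LocalBase

/-- In an open nested space whose character is the same cardinal `κ` at every
point, the intersection of any family of fewer than `κ` open sets is open. -/
theorem open_nested_inter_open
    {X : Type*} [TopologicalSpace X]
    (hnested : ∀ x : X, ∃ B : Set (Set X),
        (∀ U ∈ B, IsOpen U ∧ x ∈ U) ∧ IsChain (· ⊆ ·) B ∧
        (∀ U : Set X, IsOpen U → x ∈ U → ∃ V ∈ B, V ⊆ U))
    (κ : Cardinal) (hκ : ∀ x : X, character X x = κ)
    (γ : Set (Set X)) (hγ : ∀ U ∈ γ, IsOpen U) (hcard : #γ < κ) :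
    IsOpen (⋂₀ γ) := by
  refine isOpen_iff_mem_nhds.2 fun x hx => ?_
  obtain ⟨B, hBopen, hchain, hBbase⟩ := hnested x
  exact sInter_mem_nhds_of_mk_lt_character ⟨hBopen, hBbase⟩ hchain hγ (hκ x ▸ hcard) hx
end

section
/- Let G be a rectifiable space with operations p, q and right neutral element e, and let C be the connected component of e. If C is open, then G is the union of the sets p({x} × C) over x ∈ G, and these sets form a partition of G into open connected subsets, each homeomorphic to C. -/
/-- Let `G` be a rectifiable space and `C` the connected component of the
right neutral element `e`. If `C` is open, then the sets `x · C = p({x} × C)`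
cover `G`, form a partition into pairwise equal-or-disjoint open connected
sets, each homeomorphic to `C`. -/
theorem rectifiable_partition_by_component
    {G : Type*} [TopologicalSpace G] (e : G) (p q : G × G → G)
    (hp : Continuous p) (hq : Continuous q)
    (hpq : ∀ x y : G, p (x, q (x, y)) = y)
    (hqp : ∀ x y : G, q (x, p (x, y)) = y)
    (hqe : ∀ x : G, q (x, x) = e)
    (hopen : IsOpen (connectedComponent e)) :
    (⋃ x : G, (fun y => p (x, y)) '' connectedComponent e) = Set.univ ∧
    (∀ x y : G,
        (fun z => p (x, z)) '' connectedComponent e =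
          (fun z => p (y, z)) '' connectedComponent e ∨
        Disjoint ((fun z => p (x, z)) '' connectedComponent e)
          ((fun z => p (y, z)) '' connectedComponent e)) ∧
    (∀ x : G, IsOpen ((fun z => p (x, z)) '' connectedComponent e) ∧
        IsConnected ((fun z => p (x, z)) '' connectedComponent e) ∧
        Nonempty ((connectedComponent e) ≃ₜ
          ((fun z => p (x, z)) '' connectedComponent e : Set G))) := by
  -- For each `x`, `y ↦ p (x, y)` is a homeomorphism with inverse `y ↦ q (x, y)`.
  set h : G → G ≃ₜ G := fun x =>
    { toFun := fun y => p (x, y)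
      invFun := fun y => q (x, y)
      left_inv := fun y => hqp x y
      right_inv := fun y => hpq x y
      continuous_toFun := hp.comp (Continuous.prodMk_right x)
      continuous_invFun := hq.comp (Continuous.prodMk_right x) } with hh
  have hpe : ∀ x : G, p (x, e) = x := fun x => by
    conv_lhs => rw [← hqe x]
    exact hpq x x
  -- The image of the component of `e` is the component of `x`.
  have key : ∀ x : G, (fun z => p (x, z)) '' connectedComponent e = connectedComponent x := by
    intro x
    have h1 : (fun z => p (x, z)) '' connectedComponent e ⊆ connectedComponent (p (x, e)) :=
      Continuous.image_connectedComponent_subset (hp.comp (Continuous.prodMk_right x)) e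
    have h2 : (fun z => q (x, z)) '' connectedComponent x ⊆ connectedComponent (q (x, x)) :=
      Continuous.image_connectedComponent_subset (hq.comp (Continuous.prodMk_right x)) x
    rw [hpe x] at h1
    rw [hqe x] at h2
    refine h1.antisymm fun z hz => ?_
    exact ⟨q (x, z), h2 ⟨z, hz, rfl⟩, hpq x z⟩
  refine ⟨?_, ?_, ?_⟩
  · refine Set.eq_univ_of_forall fun z => Set.mem_iUnion.2 ⟨z, ?_⟩
    rw [key z]; exact mem_connectedComponent
  · intro x y
    rw [key x, key y]
    by_cases hxy : connectedComponent x = connectedComponent y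
    · exact Or.inl hxy
    · exact Or.inr (connectedComponent_disjoint hxy)
  · intro x
    refine ⟨?_, ?_, ?_⟩
    · exact (h x).isOpenMap _ hopen
    · rw [key x]; exact isConnected_connectedComponent
    · exact ⟨(h x).image (connectedComponent e)⟩
end

section
/- Let G be a rectifiable space that is orderable (homeomorphic to a linearly ordered topological space with its order topology). Then there is a local base at the right neutral element e of G that is linearly ordered by inclusion (a totally ordered base of neighborhoods of e). -/
/-!
At a point `e` of a linearly ordered space, intervals `(f i, g i)` with `f` increasing cofinally
in `(-∞, e)` and `g` decreasing coinitially in `(e, ∞)`, both indexed by the same well-order, form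
a neighbourhood base which is a chain. Such `f` and `g` exist once the cofinality of `(-∞, e)`
equals the coinitiality `c` of `(e, ∞)`; the degenerate cases where `e` is isolated on one side
are handled directly.

The rectifiable structure forces this equality. Fewer than `c` right neighbourhoods of `e` meet
in a right neighbourhood, so no set of size `< c` inside `(e, ∞)` accumulates at `e`. Let
`A ⊆ (-∞, e)` accumulate at `e` with `|A| < c`. Since `q (a, e) ≠ e` and `q (·, e)` is continuous,
the points `a ∈ A` with `q (a, e) < e` still accumulate at `e`. For each such `a` we have
`q (a, b) < e` for `b` in a right neighbourhood of `e`; the common part of these neighbourhoods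
contains some `b` with `q (e, b) > e` (otherwise `q (e, ·)` would send points right of `e` into
`(-∞, e)` above all of `A`). Continuity of `q (·, b)` at `e` now gives `q (e, b) ≤ e`.
Reversing the order gives the other inequality.
-/

open Set Filter Topology Cardinal OrderDual

section Cofinality

variable (α : Type*) [LinearOrder α]

theorem exists_isCofinal_wellFoundedLT : ∃ s : Set α, IsCofinal s ∧ WellFoundedLT s := by
  refine ⟨_, isCofinal_setOfPred_imp_lt WellOrderingRel, ⟨Subrelation.wf ?_
    (InvImage.wf Subtype.val (IsWellFounded.wf (r := WellOrderingRel)))⟩⟩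
  intro x y hxy
  rcases trichotomous_of WellOrderingRel x.1 y.1 with h | h | h
  · exact h
  · exact absurd (Subtype.ext h ▸ hxy) (lt_irrefl _)
  · exact absurd (x.2 _ h) (not_lt.2 hxy.le)

theorem exists_strictMono_isCofinal_range :
    ∃ f : (Order.cof α).ord.ToType → α, StrictMono f ∧ IsCofinal (range f) := by
  obtain ⟨s, hs, hwf⟩ := exists_isCofinal_wellFoundedLT α
  obtain ⟨t, ht, htype⟩ := Ordinal.exists_ord_cof_eq s
  rw [Order.cof_eq_of_isCofinal hs, ← Ordinal.type_toType (Order.cof α).ord] at htype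
  let φ := OrderIso.ofRelIsoLT (Ordinal.type_eq.1 htype).some
  refine ⟨fun i => (φ.symm i : s), ?_, ?_⟩
  · exact (Subtype.strictMono_coe _).comp ((Subtype.strictMono_coe _).comp φ.symm.strictMono)
  · refine (hs.trans ht).mono ?_
    rintro _ ⟨x, hx, rfl⟩
    exact ⟨φ ⟨x, hx⟩, by simp⟩

end Cofinality

theorem exists_open_chain_nhds_basis {X ι : Type*} [TopologicalSpace X] {x : X} {p : ι → Prop}
    {s : ι → Set X} (h : (𝓝 x).HasBasis p s) (hs : IsChain (· ⊆ ·) (range s)) :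
    ∃ B : Set (Set X), (∀ U ∈ B, IsOpen U ∧ x ∈ U) ∧ IsChain (· ⊆ ·) B ∧
      ∀ U, IsOpen U → x ∈ U → ∃ V ∈ B, V ⊆ U := by
  refine ⟨interior '' (s '' {i | p i}), ?_, ?_, ?_⟩
  · rintro _ ⟨_, ⟨i, hi, rfl⟩, rfl⟩
    exact ⟨isOpen_interior, mem_interior_iff_mem_nhds.2 (h.mem_of_mem hi)⟩
  · exact (hs.mono (image_subset_range _ _)).image_of_map_rel _ _ interior
      fun _ _ => interior_mono
  · intro U hU hxU
    obtain ⟨i, hi, hiU⟩ := h.mem_iff.1 (hU.mem_nhds hxU)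
    exact ⟨_, ⟨_, ⟨i, hi, rfl⟩, rfl⟩, interior_subset.trans hiU⟩

theorem notMem_closure_of_mk_lt {X : Type*} [TopologicalSpace X] [T1Space X] {x : X}
    {s Y : Set X} {c : Cardinal} [CardinalInterFilter (𝓝[s] x) c] (hYs : Y ⊆ s) (hxY : x ∉ Y)
    (hY : #Y < c) : x ∉ closure Y := by
  have hcompl : ∀ᶠ z in 𝓝[s] x, ∀ y ∈ Y, z ≠ y := (eventually_cardinal_ball hY).2 fun y hy =>
    nhdsWithin_le_nhds (compl_singleton_mem_nhds fun h => hxY (h ▸ hy))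
  rw [mem_closure_iff_nhdsWithin_neBot, not_neBot, ← empty_mem_iff_bot]
  filter_upwards [nhdsWithin_mono x hYs hcompl, self_mem_nhdsWithin] with z hz hzY
  exact hz z hzY rfl

section OrderTopology

variable {α : Type*} [TopologicalSpace α] [LinearOrder α] [OrderTopology α] {e : α}

theorem exists_open_chain_nhds_basis_of_nhdsLT_eq_bot (h : 𝓝[<] e = ⊥) :
    ∃ B : Set (Set α), (∀ U ∈ B, IsOpen U ∧ e ∈ U) ∧ IsChain (· ⊆ ·) B ∧
      ∀ U, IsOpen U → e ∈ U → ∃ V ∈ B, V ⊆ U := by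
  have hnhds : 𝓝[≥] e = 𝓝 e := by rw [← nhdsLT_sup_nhdsGE, h, bot_sup_eq]
  rcases isTop_or_exists_gt e with htop | hgt
  · have hpure : 𝓝 e = pure e := by
      rw [← hnhds, Ici_eq_singleton_iff_isTop.2 htop, nhdsWithin_singleton]
    exact exists_open_chain_nhds_basis (hpure ▸ hasBasis_pure e) (subsingleton_range _).isChain
  · exact exists_open_chain_nhds_basis (hnhds ▸ nhdsGE_basis_of_exists_gt hgt)
      (Monotone.isChain_range (f := Ico e) fun _ _ => Ico_subset_Ico_right)

theorem nhds_hasAntitoneBasis_Ioo {ι : Type*} [LinearOrder ι] {f : ι → Iio e}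
    {g : ι → (Ioi e)ᵒᵈ} (hf : Monotone f) (hg : Monotone g) (hfc : IsCofinal (range f))
    (hgc : IsCofinal (range g)) (hl : ∃ l, l < e) (hu : ∃ u, e < u) :
    (𝓝 e).HasAntitoneBasis fun i => Ioo (f i : α) ((ofDual (g i) : Ioi e) : α) := by
  refine ⟨(nhds_basis_Ioo' hl hu).to_hasBasis ?_ fun i _ =>
    ⟨((f i : α), ((ofDual (g i) : Ioi e) : α)), ⟨(f i).2, (ofDual (g i)).2⟩, subset_rfl⟩,
    fun i j hij => Ioo_subset_Ioo (hf hij) (hg hij)⟩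
  rintro ⟨l, u⟩ ⟨hl, hu⟩
  obtain ⟨_, ⟨i, rfl⟩, hi⟩ := hfc ⟨l, hl⟩
  obtain ⟨_, ⟨j, rfl⟩, hj⟩ := hgc (toDual ⟨u, hu⟩)
  refine ⟨max i j, trivial, Ioo_subset_Ioo ?_ ?_⟩
  · exact (Subtype.mk_le_mk.1 hi).trans (hf (le_max_left i j))
  · exact hj.trans (hg (le_max_right i j))

instance cardinalInterFilter_nhdsGT (e : α) :
    CardinalInterFilter (𝓝[>] e) (Order.cof (Ioi e)ᵒᵈ) := by
  refine ⟨fun S hS hSmem => ?_⟩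
  rcases isTop_or_exists_gt e with htop | ⟨u, hu⟩
  · simp [Ioi_eq_empty_iff.2 htop.isMax]
  have hbasis := nhdsGT_basis_of_exists_gt ⟨u, hu⟩
  choose t ht htS using fun s : S => hbasis.mem_iff.1 (hSmem s s.2)
  have hsmall : ¬ IsCofinal (range fun s => toDual (⟨t s, ht s⟩ : Ioi e)) := fun hc =>
    absurd hS (not_lt.2 ((Order.cof_le hc).trans mk_range_le))
  obtain ⟨x, hx⟩ := not_isCofinal_iff.1 hsmall
  refine mem_of_superset (hbasis.mem_of_mem (ofDual x).2) fun y hy s hs => htS ⟨s, hs⟩ ?_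
  exact ⟨hy.1, hy.2.trans (hx _ ⟨⟨s, hs⟩, rfl⟩)⟩

theorem mem_closure_image_val_of_isCofinal [hne : (𝓝[<] e).NeBot] {A : Set (Iio e)}
    (hA : IsCofinal A) : e ∈ closure (Subtype.val '' A) := by
  refine mem_closure_iff_nhds.2 fun U hU => ?_
  obtain ⟨l, hl, hlU⟩ :=
    exists_Ioc_subset_of_mem_nhds hU (hne.nonempty_of_mem self_mem_nhdsWithin)
  obtain ⟨y, hly, hye⟩ := hne.nonempty_of_mem (Ioo_mem_nhdsLT hl)
  obtain ⟨a, haA, hya⟩ := hA ⟨y, hye⟩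
  exact ⟨a, hlU ⟨hly.trans_le hya, a.2.le⟩, a, haA, rfl⟩

end OrderTopology

section Rectifiable

variable {G : Type*} [TopologicalSpace G] [LinearOrder G] [OrderTopology G] {e : G}
  {q : G × G → G} {c : Cardinal} [CardinalInterFilter (𝓝[>] e) c] {A : Set G}

theorem mem_closure_setOf_lt_of_rectifiable (hq : Continuous q)
    (hq_eq : ∀ x y, q (x, y) = e ↔ y = x) (hA : A ⊆ Iio e) (heA : e ∈ closure A)
    (hAc : #A < c) : e ∈ closure {a ∈ A | q (a, e) < e} := by
  have hsplit : A = {a ∈ A | q (a, e) < e} ∪ {a ∈ A | e < q (a, e)} := by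
    ext a
    refine ⟨fun ha => ?_, fun ha => ha.elim And.left And.left⟩
    rcases lt_trichotomy (q (a, e)) e with h | h | h
    · exact Or.inl ⟨ha, h⟩
    · exact absurd ((hq_eq a e).1 h) (hA ha).ne'
    · exact Or.inr ⟨ha, h⟩
  rw [hsplit, closure_union] at heA
  refine heA.resolve_right fun he => ?_
  have hmem := map_mem_closure (by fun_prop : Continuous fun a => q (a, e)) he
    (mapsTo_image _ _)
  rw [(hq_eq e e).2 rfl] at hmem
  refine notMem_closure_of_mk_lt (s := Ioi e) (c := c) ?_ (fun h => ?_) ?_ hmem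
  · rintro _ ⟨a, ha, rfl⟩
    exact ha.2
  · obtain ⟨a, ha, hae⟩ := h
    exact ha.2.ne' hae
  · exact mk_image_le.trans_lt ((mk_le_mk_of_subset fun a ha => ha.1).trans_lt hAc)

theorem frequently_lt_of_rectifiable [(𝓝[>] e).NeBot] (hq : Continuous q)
    (hq_eq : ∀ x y, q (x, y) = e ↔ y = x) (hA : A ⊆ Iio e) (heA : e ∈ closure A)
    (hAc : #A < c) : ∃ᶠ b in 𝓝[>] e, e < q (e, b) := by
  intro hle
  have hq_e : Tendsto (fun b => q (e, b)) (𝓝[>] e) (𝓝 e) := by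
    simpa only [(hq_eq e e).2 rfl] using
      ((show Continuous fun b => q (e, b) by fun_prop).tendsto e).mono_left nhdsWithin_le_nhds
  have habove : ∀ᶠ b in 𝓝[>] e, ∀ a ∈ A, a < q (e, b) :=
    (eventually_cardinal_ball hAc).2 fun a ha => hq_e.eventually_const_lt (hA ha)
  obtain ⟨b, hbA, hbe, hb⟩ := (habove.and (hle.and self_mem_nhdsWithin)).exists
  have hlt : q (e, b) < e := (not_lt.1 hbe).lt_of_ne fun h => hb.ne ((hq_eq e b).1 h).symm
  obtain ⟨a, hqa, ha⟩ := mem_closure_iff_nhds.1 heA _ (Ioi_mem_nhds hlt)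
  exact lt_asymm hqa (hbA a ha)

theorem le_mk_of_rectifiable [(𝓝[>] e).NeBot] (hq : Continuous q)
    (hq_eq : ∀ x y, q (x, y) = e ↔ y = x) (hA : A ⊆ Iio e) (heA : e ∈ closure A) :
    c ≤ #A := by
  by_contra! hAc
  set A₁ := {a ∈ A | q (a, e) < e}
  have hA₁c : #A₁ < c := (mk_le_mk_of_subset fun a ha => ha.1).trans_lt hAc
  have hbelow : ∀ᶠ b in 𝓝[>] e, ∀ a ∈ A₁, q (a, b) < e :=
    (eventually_cardinal_ball hA₁c).2 fun a ha => nhdsWithin_le_nhds <|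
      (show Continuous fun b => q (a, b) by fun_prop).continuousAt.eventually_lt
        continuousAt_const ha.2
  obtain ⟨b, hb, hbA₁⟩ := ((frequently_lt_of_rectifiable hq hq_eq hA heA hAc).and_eventually
    hbelow).exists
  have hmaps : MapsTo (fun a => q (a, b)) A₁ (Iic e) := fun a ha => (hbA₁ a ha).le
  exact (hmaps.closure_left (by fun_prop) isClosed_Iic
    (mem_closure_setOf_lt_of_rectifiable hq hq_eq hA heA hAc)).not_gt hb

theorem cof_Ioi_le_cof_Iio_of_rectifiable [(𝓝[<] e).NeBot] [(𝓝[>] e).NeBot]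
    (hq : Continuous q) (hq_eq : ∀ x y, q (x, y) = e ↔ y = x) :
    Order.cof (Ioi e)ᵒᵈ ≤ Order.cof (Iio e) := by
  obtain ⟨A, hA, hAcard⟩ := Order.exists_cof_eq (Iio e)
  calc Order.cof (Ioi e)ᵒᵈ ≤ #(Subtype.val '' A) :=
        le_mk_of_rectifiable hq hq_eq (Subtype.coe_image_subset _ _)
          (mem_closure_image_val_of_isCofinal hA)
    _ ≤ #A := mk_image_le
    _ = Order.cof (Iio e) := hAcard

theorem cof_Iio_eq_cof_Ioi_of_rectifiable [hl : (𝓝[<] e).NeBot] [hr : (𝓝[>] e).NeBot]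
    (hq : Continuous q) (hq_eq : ∀ x y, q (x, y) = e ↔ y = x) :
    Order.cof (Iio e) = Order.cof (Ioi e)ᵒᵈ :=
  -- `Gᵒᵈ` has the same topology as `G`, so `q` rectifies it as well.
  le_antisymm (@cof_Ioi_le_cof_Iio_of_rectifiable Gᵒᵈ _ _ _ (toDual e) q hr hl hq hq_eq)
    (cof_Ioi_le_cof_Iio_of_rectifiable hq hq_eq)

end Rectifiable

theorem rectifiable_orderable_totally_ordered_base_general
    {G : Type*} [TopologicalSpace G] [LinearOrder G] [OrderTopology G]
    (e : G) (p q : G × G → G)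
    (hq : Continuous q)
    (hpq : ∀ x y : G, p (x, q (x, y)) = y)
    (hqe : ∀ x : G, q (x, x) = e) :
    ∃ B : Set (Set G), (∀ U ∈ B, IsOpen U ∧ e ∈ U) ∧ IsChain (· ⊆ ·) B ∧
      (∀ U : Set G, IsOpen U → e ∈ U → ∃ V ∈ B, V ⊆ U) := by
  have hq_eq : ∀ x y, q (x, y) = e ↔ y = x := fun x y =>
    ⟨fun h => by rw [← hpq x y, h, ← hqe x, hpq], fun h => h ▸ hqe x⟩
  by_cases hl : 𝓝[<] e = ⊥
  · exact exists_open_chain_nhds_basis_of_nhdsLT_eq_bot hl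
  by_cases hr : 𝓝[>] e = ⊥
  · exact exists_open_chain_nhds_basis_of_nhdsLT_eq_bot (α := Gᵒᵈ) hr
  have hl' : (𝓝[<] e).NeBot := neBot_iff.2 hl
  have hr' : (𝓝[>] e).NeBot := neBot_iff.2 hr
  obtain ⟨f, hf, hfc⟩ := exists_strictMono_isCofinal_range (Iio e)
  obtain ⟨g, hg, hgc⟩ : ∃ g : (Order.cof (Iio e)).ord.ToType → (Ioi e)ᵒᵈ,
      StrictMono g ∧ IsCofinal (range g) :=
    cof_Iio_eq_cof_Ioi_of_rectifiable hq hq_eq ▸ exists_strictMono_isCofinal_range _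
  have hbasis := nhds_hasAntitoneBasis_Ioo hf.monotone hg.monotone hfc hgc
    (hl'.nonempty_of_mem self_mem_nhdsWithin) (hr'.nonempty_of_mem self_mem_nhdsWithin)
  exact exists_open_chain_nhds_basis hbasis.toHasBasis hbasis.antitone.isChain_range

/-- In an orderable rectifiable space `G` there is a local base at the right
neutral element `e` which is linearly ordered by inclusion. -/
theorem rectifiable_orderable_totally_ordered_base
    {G : Type*} [TopologicalSpace G] [LinearOrder G] [OrderTopology G]
    (e : G) (p q : G × G → G)
    (hp : Continuous p) (hq : Continuous q)
    (hpq : ∀ x y : G, p (x, q (x, y)) = y)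
    (hqp : ∀ x y : G, q (x, p (x, y)) = y)
    (hqe : ∀ x : G, q (x, x) = e) :
    ∃ B : Set (Set G), (∀ U ∈ B, IsOpen U ∧ e ∈ U) ∧ IsChain (· ⊆ ·) B ∧
      (∀ U : Set G, IsOpen U → e ∈ U → ∃ V ∈ B, V ⊆ U) :=
  rectifiable_orderable_totally_ordered_base_general e p q hq hpq hqe
end

section
/- Let G be a rectifiable space in which the right neutral element e has a local base linearly ordered by inclusion. Then either G is first-countable at e, or e has a local base linearly ordered by inclusion consisting of clopen p,q-stable subsets of G. -/
/-- A `p,q`-stable set containing an open neighborhood of `e` is clopen. -/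
lemma rectifiable_stable_nhd_clopen {G : Type*} [TopologicalSpace G]
    (e : G) (p q : G × G → G) (hq : Continuous q)
    (hpq : ∀ x y : G, p (x, q (x, y)) = y)
    (hqe : ∀ x : G, q (x, x) = e)
    (S W : Set G) (hWo : IsOpen W) (heW : e ∈ W) (hWS : W ⊆ S)
    (hpst : ∀ a ∈ S, ∀ b ∈ S, p (a, b) ∈ S) :
    IsOpen S ∧ IsClosed S := by
  constructor
  · rw [isOpen_iff_mem_nhds]
    intro a haS
    rw [mem_nhds_iff]
    refine ⟨(fun g => q (a, g)) ⁻¹' W, ?_, ?_, ?_⟩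
    · intro g hg
      have h1 : q (a, g) ∈ S := hWS hg
      have h2 := hpst a haS _ h1
      rwa [hpq a g] at h2
    · exact hWo.preimage (hq.comp (Continuous.prodMk_right a))
    · simp only [Set.mem_preimage, hqe a]; exact heW
  · rw [← isOpen_compl_iff, isOpen_iff_mem_nhds]
    intro x hx
    rw [mem_nhds_iff]
    refine ⟨(fun g => q (g, x)) ⁻¹' W, ?_, ?_, ?_⟩
    · intro g hg hgS
      apply hx
      have h1 : q (g, x) ∈ S := hWS hg
      have h2 := hpst g hgS _ h1
      rwa [hpq g x] at h2
    · exact hWo.preimage (hq.comp (continuous_id.prodMk continuous_const))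
    · simp only [Set.mem_preimage, hqe x]; exact heW

/-- If the right neutral element `e` of a rectifiable space `G` has a local
base linearly ordered by inclusion, then either `G` is first-countable at `e`,
or `e` has a linearly ordered (by inclusion) local base consisting of clopen
`p, q`-stable subsets. -/
theorem rectifiable_chain_base_dichotomy
    {G : Type*} [TopologicalSpace G] (e : G) (p q : G × G → G)
    (hp : Continuous p) (hq : Continuous q)
    (hpq : ∀ x y : G, p (x, q (x, y)) = y)
    (hqp : ∀ x y : G, q (x, p (x, y)) = y)
    (hqe : ∀ x : G, q (x, x) = e)
    (hbase : ∃ B : Set (Set G), (∀ U ∈ B, IsOpen U ∧ e ∈ U) ∧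
        IsChain (· ⊆ ·) B ∧
        (∀ U : Set G, IsOpen U → e ∈ U → ∃ V ∈ B, V ⊆ U)) :
    (∃ B : Set (Set G), B.Countable ∧ (∀ U ∈ B, IsOpen U ∧ e ∈ U) ∧
        (∀ U : Set G, IsOpen U → e ∈ U → ∃ V ∈ B, V ⊆ U)) ∨
    (∃ B : Set (Set G), (∀ U ∈ B, IsOpen U ∧ IsClosed U ∧ e ∈ U ∧
          (∀ a ∈ U, ∀ b ∈ U, p (a, b) ∈ U) ∧
          (∀ a ∈ U, ∀ b ∈ U, q (a, b) ∈ U)) ∧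
        IsChain (· ⊆ ·) B ∧
        (∀ U : Set G, IsOpen U → e ∈ U → ∃ V ∈ B, V ⊆ U)) := by
  classical
  obtain ⟨B, hBo, hBchain, hBbase⟩ := hbase
  have hpe : p (e, e) = e := by have h := hpq e e; rwa [hqe] at h
  by_cases hcase : (∃ B : Set (Set G), B.Countable ∧ (∀ U ∈ B, IsOpen U ∧ e ∈ U) ∧
        (∀ U : Set G, IsOpen U → e ∈ U → ∃ V ∈ B, V ⊆ U))
  · exact Or.inl hcase
  right
  -- every countable subfamily of B has a lower bound in B
  have key : ∀ V : ℕ → Set G, (∀ n, V n ∈ B) → ∃ W ∈ B, ∀ n, W ⊆ V n := by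
    intro V hV
    by_contra hno
    push_neg at hno
    apply hcase
    refine ⟨Set.range V, Set.countable_range V, ?_, ?_⟩
    · rintro U ⟨n, rfl⟩; exact hBo _ (hV n)
    · intro U hUo hUe
      obtain ⟨W, hWB, hWU⟩ := hBbase U hUo hUe
      obtain ⟨n, hn⟩ := hno W hWB
      refine ⟨V n, ⟨n, rfl⟩, ?_⟩
      rcases eq_or_ne W (V n) with h | h
      · exact absurd (h ▸ Set.Subset.rfl) hn
      · rcases hBchain hWB (hV n) h with h1 | h1
        · exact absurd h1 hn
        · exact h1.trans hWU
  -- the canonical "halving" operator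
  set d : Set G → Set G := fun W =>
    ⋃₀ {V | V ∈ B ∧ V ⊆ W ∧ V ×ˢ V ⊆ p ⁻¹' W ∧ V ×ˢ V ⊆ q ⁻¹' W} with hd
  have hd_sub : ∀ W, d W ⊆ W := by
    rintro W x ⟨V, ⟨-, hVW, -, -⟩, hx⟩; exact hVW hx
  have hd_open : ∀ W, IsOpen (d W) := by
    intro W
    apply isOpen_sUnion
    rintro V ⟨hVB, -, -, -⟩
    exact (hBo V hVB).1
  have hd_mono : ∀ W W' : Set G, W ⊆ W' → d W ⊆ d W' := by
    intro W W' hWW'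
    apply Set.sUnion_subset_sUnion
    rintro V ⟨hVB, h1, h2, h3⟩
    exact ⟨hVB, h1.trans hWW', h2.trans (Set.preimage_mono hWW'),
      h3.trans (Set.preimage_mono hWW')⟩
  have hd_mem : ∀ W, IsOpen W → e ∈ W → ∃ V ∈ B, V ⊆ d W := by
    intro W hWo heW
    have hopen : IsOpen (p ⁻¹' W ∩ q ⁻¹' W) :=
      (hWo.preimage hp).inter (hWo.preimage hq)
    have hee : (e, e) ∈ p ⁻¹' W ∩ q ⁻¹' W := by
      constructor <;> simp only [Set.mem_preimage, hpe, hqe] <;> exact heW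
    rw [isOpen_prod_iff] at hopen
    obtain ⟨u, v, huo, hvo, heu, hev, huv⟩ := hopen e e hee
    obtain ⟨V, hVB, hVsub⟩ := hBbase (u ∩ v ∩ W)
      ((huo.inter hvo).inter hWo) ⟨⟨heu, hev⟩, heW⟩
    refine ⟨V, hVB, Set.subset_sUnion_of_mem ?_⟩
    have hVu : V ⊆ u := fun x hx => ((hVsub hx).1).1
    have hVv : V ⊆ v := fun x hx => ((hVsub hx).1).2
    have hVW : V ⊆ W := fun x hx => (hVsub hx).2
    have hVV : V ×ˢ V ⊆ u ×ˢ v := Set.prod_mono hVu hVv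
    exact ⟨hVB, hVW, (hVV.trans huv).trans Set.inter_subset_left,
      (hVV.trans huv).trans Set.inter_subset_right⟩
  have hd_pq : ∀ W, ∀ x ∈ d W, ∀ y ∈ d W, p (x, y) ∈ W ∧ q (x, y) ∈ W := by
    rintro W x ⟨V₁, ⟨hV₁B, h₁W, h₁p, h₁q⟩, hx⟩ y ⟨V₂, ⟨hV₂B, h₂W, h₂p, h₂q⟩, hy⟩
    have hV : ∃ V : Set G, (V ×ˢ V ⊆ p ⁻¹' W ∧ V ×ˢ V ⊆ q ⁻¹' W) ∧ x ∈ V ∧ y ∈ V := by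
      rcases eq_or_ne V₁ V₂ with h | h
      · exact ⟨V₁, ⟨h₁p, h₁q⟩, hx, h ▸ hy⟩
      · rcases hBchain hV₁B hV₂B h with h1 | h1
        · exact ⟨V₂, ⟨h₂p, h₂q⟩, h1 hx, hy⟩
        · exact ⟨V₁, ⟨h₁p, h₁q⟩, hx, h1 hy⟩
    obtain ⟨V, ⟨hVp, hVq⟩, hxV, hyV⟩ := hV
    exact ⟨hVp (Set.mk_mem_prod hxV hyV), hVq (Set.mk_mem_prod hxV hyV)⟩
  -- iterates of d
  have hiter : ∀ U : Set G, IsOpen U → e ∈ U → ∀ n : ℕ,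
      IsOpen (d^[n] U) ∧ e ∈ d^[n] U ∧ ∃ V ∈ B, V ⊆ d^[n] U := by
    intro U hUo hUe n
    induction n with
    | zero => exact ⟨hUo, hUe, hBbase U hUo hUe⟩
    | succ n ih =>
      obtain ⟨iho, ihe, -⟩ := ih
      rw [Function.iterate_succ_apply']
      obtain ⟨V, hVB, hVsub⟩ := hd_mem _ iho ihe
      exact ⟨hd_open _, hVsub (hBo V hVB).2, V, hVB, hVsub⟩
  have hiter_mono : ∀ U U' : Set G, U ⊆ U' → ∀ n : ℕ, d^[n] U ⊆ d^[n] U' := by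
    intro U U' h n
    induction n with
    | zero => exact h
    | succ n ih =>
      rw [Function.iterate_succ_apply', Function.iterate_succ_apply']
      exact hd_mono _ _ ih
  set S : Set G → Set G := fun U => ⋂ n, d^[n] U with hS
  have hS_mono : ∀ U U' : Set G, U ⊆ U' → S U ⊆ S U' :=
    fun U U' h => Set.iInter_mono fun n => hiter_mono U U' h n
  have hS_sub : ∀ U, S U ⊆ U := fun U => Set.iInter_subset _ 0
  have hS_mem : ∀ U, e ∈ S U → True := fun _ _ => trivial
  have hS_p : ∀ U : Set G, ∀ a ∈ S U, ∀ b ∈ S U, p (a, b) ∈ S U := by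
    intro U a ha b hb
    rw [Set.mem_iInter]
    intro n
    have ha' : a ∈ d^[n+1] U := Set.mem_iInter.1 ha (n+1)
    have hb' : b ∈ d^[n+1] U := Set.mem_iInter.1 hb (n+1)
    rw [Function.iterate_succ_apply'] at ha' hb'
    exact (hd_pq _ a ha' b hb').1
  have hS_q : ∀ U : Set G, ∀ a ∈ S U, ∀ b ∈ S U, q (a, b) ∈ S U := by
    intro U a ha b hb
    rw [Set.mem_iInter]
    intro n
    have ha' : a ∈ d^[n+1] U := Set.mem_iInter.1 ha (n+1)
    have hb' : b ∈ d^[n+1] U := Set.mem_iInter.1 hb (n+1)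
    rw [Function.iterate_succ_apply'] at ha' hb'
    exact (hd_pq _ a ha' b hb').2
  -- in the non-first-countable case, S U contains a member of B
  have hS_nbhd : ∀ U : Set G, IsOpen U → e ∈ U → ∃ W ∈ B, W ⊆ S U := by
    intro U hUo hUe
    choose V hVB hVsub using fun n => (hiter U hUo hUe n).2.2
    obtain ⟨W, hWB, hW⟩ := key V hVB
    refine ⟨W, hWB, ?_⟩
    rw [Set.subset_iInter_iff]
    exact fun n => (hW n).trans (hVsub n)
  refine ⟨S '' B, ?_, ?_, ?_⟩
  · rintro T ⟨U, hUB, rfl⟩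
    obtain ⟨hUo, hUe⟩ := hBo U hUB
    obtain ⟨W, hWB, hWsub⟩ := hS_nbhd U hUo hUe
    obtain ⟨hWo, hWe⟩ := hBo W hWB
    obtain ⟨ho, hc⟩ := rectifiable_stable_nhd_clopen e p q hq hpq hqe
      (S U) W hWo hWe hWsub (hS_p U)
    exact ⟨ho, hc, Set.mem_iInter.2 fun n => (hiter U hUo hUe n).2.1,
      hS_p U, hS_q U⟩
  · rintro T ⟨U, hUB, rfl⟩ T' ⟨U', hU'B, rfl⟩ hne
    have hUU' : U ≠ U' := fun h => hne (by rw [h])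
    rcases hBchain hUB hU'B hUU' with h | h
    · exact Or.inl (hS_mono _ _ h)
    · exact Or.inr (hS_mono _ _ h)
  · intro U hUo hUe
    obtain ⟨V, hVB, hVU⟩ := hBbase U hUo hUe
    exact ⟨S V, ⟨V, hVB, rfl⟩, (hS_sub V).trans hVU⟩
end

section
/- Let G be a rectifiable space with operations p, q and right neutral element e, and let U be an open neighborhood of e. Then there exists a sequence (Uₙ) of open neighborhoods of e with U₁ = U such that for every n, p(U_{n+1} × U_{n+1}) ⊆ Uₙ and q(U_{n+1} × U_{n+1}) ⊆ Uₙ; moreover the set B = ⋂ₙ Uₙ satisfies p(B × B) ⊆ B and q(B × B) ⊆ B. -/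
/-! Both operations fix `(e, e)`, so by continuity every neighborhood `W` of `e` contains the
images under `p` and `q` of a square `V × V` of an open neighborhood `V` of `e`; iterating this
choice gives the sequence. Points of `⋂ₙ Uₙ` lie in every `U_{n+1}`, so their images lie in
every `Uₙ`. -/

open Topology

theorem exists_seq_of_forall_exists {α : Type*} (P : α → Prop) (r : α → α → Prop)
    (h : ∀ a, P a → ∃ b, P b ∧ r b a) {a₀ : α} (ha₀ : P a₀) :
    ∃ f : ℕ → α, f 0 = a₀ ∧ (∀ n, P (f n)) ∧ ∀ n, r (f (n + 1)) (f n) := by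
  choose! g hgP hgr using h
  have hP : ∀ n, P (g^[n] a₀) := Function.Iterate.rec P ha₀ hgP
  refine ⟨fun n => g^[n] a₀, rfl, hP, fun n => ?_⟩
  simpa only [Function.iterate_succ_apply'] using hgr _ (hP n)

theorem exists_isOpen_square_mapsTo {X : Type*} [TopologicalSpace X] {f g : X × X → X} {e : X}
    (hf : ContinuousAt f (e, e)) (hg : ContinuousAt g (e, e)) (hfe : f (e, e) = e)
    (hge : g (e, e) = e) {W : Set X} (hW : W ∈ 𝓝 e) :
    ∃ V, IsOpen V ∧ e ∈ V ∧ ∀ a ∈ V, ∀ b ∈ V, f (a, b) ∈ W ∧ g (a, b) ∈ W := by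
  have hfW : f ⁻¹' W ∈ 𝓝 (e, e) := hf.preimage_mem_nhds (by rwa [hfe])
  have hgW : g ⁻¹' W ∈ 𝓝 (e, e) := hg.preimage_mem_nhds (by rwa [hge])
  obtain ⟨V, hV, heV, hVW⟩ := exists_nhds_square (Filter.inter_mem hfW hgW)
  exact ⟨V, hV, heV, fun a ha b hb => hVW (Set.mk_mem_prod ha hb)⟩

theorem apply_mem_iInter_of_forall_succ {X : Type*} {f : X × X → X} {V : ℕ → Set X}
    (h : ∀ n, ∀ a ∈ V (n + 1), ∀ b ∈ V (n + 1), f (a, b) ∈ V n) :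
    ∀ a ∈ ⋂ n, V n, ∀ b ∈ ⋂ n, V n, f (a, b) ∈ ⋂ n, V n := by
  intro a ha b hb
  rw [Set.mem_iInter] at ha hb ⊢
  exact fun n => h n a (ha (n + 1)) b (hb (n + 1))

theorem rectifiable_stable_intersection_general
    {G : Type*} [TopologicalSpace G] (e : G) (p q : G × G → G)
    (hp : Continuous p) (hq : Continuous q)
    (hpq : ∀ x y : G, p (x, q (x, y)) = y)
    (hqe : ∀ x : G, q (x, x) = e)
    (U : Set G) (hU : IsOpen U) (heU : e ∈ U) :
    ∃ V : ℕ → Set G, V 0 = U ∧ (∀ n : ℕ, IsOpen (V n) ∧ e ∈ V n) ∧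
      (∀ n : ℕ, ∀ a ∈ V (n + 1), ∀ b ∈ V (n + 1), p (a, b) ∈ V n) ∧
      (∀ n : ℕ, ∀ a ∈ V (n + 1), ∀ b ∈ V (n + 1), q (a, b) ∈ V n) ∧
      (∀ a ∈ ⋂ n, V n, ∀ b ∈ ⋂ n, V n, p (a, b) ∈ ⋂ n, V n) ∧
      (∀ a ∈ ⋂ n, V n, ∀ b ∈ ⋂ n, V n, q (a, b) ∈ ⋂ n, V n) := by
  have hqee : q (e, e) = e := hqe e
  have hpee : p (e, e) = e := by simpa [hqee] using hpq e e
  obtain ⟨V, hV0, hVnhds, hVstep⟩ := exists_seq_of_forall_exists (fun W => IsOpen W ∧ e ∈ W)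
    (fun V W => ∀ a ∈ V, ∀ b ∈ V, p (a, b) ∈ W ∧ q (a, b) ∈ W)
    (fun W ⟨hW, heW⟩ => by
      obtain ⟨V, hV, heV, hVW⟩ := exists_isOpen_square_mapsTo hp.continuousAt hq.continuousAt
        hpee hqee (hW.mem_nhds heW)
      exact ⟨V, ⟨hV, heV⟩, hVW⟩)
    ⟨hU, heU⟩
  have hpstep : ∀ n, ∀ a ∈ V (n + 1), ∀ b ∈ V (n + 1), p (a, b) ∈ V n :=
    fun n a ha b hb => (hVstep n a ha b hb).1
  have hqstep : ∀ n, ∀ a ∈ V (n + 1), ∀ b ∈ V (n + 1), q (a, b) ∈ V n :=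
    fun n a ha b hb => (hVstep n a ha b hb).2
  exact ⟨V, hV0, hVnhds, hpstep, hqstep, apply_mem_iInter_of_forall_succ hpstep,
    apply_mem_iInter_of_forall_succ hqstep⟩

/-- In a rectifiable space, any open neighborhood `U` of the right neutral
element `e` admits a sequence `(Uₙ)` of open neighborhoods of `e`, starting
with `U`, such that `p(U_{n+1} × U_{n+1}) ⊆ Uₙ` and
`q(U_{n+1} × U_{n+1}) ⊆ Uₙ`; the intersection `B = ⋂ₙ Uₙ` is then
`p, q`-stable. -/
theorem rectifiable_stable_intersection
    {G : Type*} [TopologicalSpace G] (e : G) (p q : G × G → G)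
    (hp : Continuous p) (hq : Continuous q)
    (hpq : ∀ x y : G, p (x, q (x, y)) = y)
    (hqp : ∀ x y : G, q (x, p (x, y)) = y)
    (hqe : ∀ x : G, q (x, x) = e)
    (U : Set G) (hU : IsOpen U) (heU : e ∈ U) :
    ∃ V : ℕ → Set G, V 0 = U ∧ (∀ n : ℕ, IsOpen (V n) ∧ e ∈ V n) ∧
      (∀ n : ℕ, ∀ a ∈ V (n + 1), ∀ b ∈ V (n + 1), p (a, b) ∈ V n) ∧
      (∀ n : ℕ, ∀ a ∈ V (n + 1), ∀ b ∈ V (n + 1), q (a, b) ∈ V n) ∧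
      (∀ a ∈ ⋂ n, V n, ∀ b ∈ ⋂ n, V n, p (a, b) ∈ ⋂ n, V n) ∧
      (∀ a ∈ ⋂ n, V n, ∀ b ∈ ⋂ n, V n, q (a, b) ∈ ⋂ n, V n) :=
  rectifiable_stable_intersection_general e p q hp hq hpq hqe U hU heU
end

section
/- In a rectifiable space G that is a P-space (every Gδ-set is open), every open neighborhood of the right neutral element e contains a clopen p,q-stable neighborhood of e. -/
/-- In a rectifiable space which is a P-space (countable intersections of open
sets are open), every open neighborhood of the right neutral element `e`
contains a clopen `p, q`-stable neighborhood of `e`. -/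
theorem rectifiable_P_space_clopen_stable_nbhd
    {G : Type*} [TopologicalSpace G] (e : G) (p q : G × G → G)
    (hp : Continuous p) (hq : Continuous q)
    (hpq : ∀ x y : G, p (x, q (x, y)) = y)
    (hqp : ∀ x y : G, q (x, p (x, y)) = y)
    (hqe : ∀ x : G, q (x, x) = e)
    (hP : ∀ f : ℕ → Set G, (∀ n, IsOpen (f n)) → IsOpen (⋂ n, f n))
    (U : Set G) (hU : IsOpen U) (heU : e ∈ U) :
    ∃ V : Set G, IsOpen V ∧ IsClosed V ∧ e ∈ V ∧ V ⊆ U ∧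
      (∀ a ∈ V, ∀ b ∈ V, p (a, b) ∈ V) ∧
      (∀ a ∈ V, ∀ b ∈ V, q (a, b) ∈ V) := by
  have pee : p (e, e) = e := by
    have h := hpq e e
    rwa [hqe e] at h
  -- Key shrinking lemma
  have key : ∀ W : Set G, IsOpen W → e ∈ W →
      ∃ W', IsOpen W' ∧ e ∈ W' ∧ W' ⊆ W ∧
        (∀ a ∈ W', ∀ b ∈ W', p (a, b) ∈ W) ∧
        (∀ a ∈ W', ∀ b ∈ W', q (a, b) ∈ W) := by
    intro W hW heW
    have hpo : IsOpen (p ⁻¹' W) := hW.preimage hp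
    have hqo : IsOpen (q ⁻¹' W) := hW.preimage hq
    have hpe : ((e, e) : G × G) ∈ p ⁻¹' W := by simpa [pee] using heW
    have hqe' : ((e, e) : G × G) ∈ q ⁻¹' W := by simpa [hqe e] using heW
    obtain ⟨u1, v1, hu1, hv1, heu1, hev1, hsub1⟩ := isOpen_prod_iff.mp hpo e e hpe
    obtain ⟨u2, v2, hu2, hv2, heu2, hev2, hsub2⟩ := isOpen_prod_iff.mp hqo e e hqe'
    refine ⟨W ∩ u1 ∩ v1 ∩ u2 ∩ v2,
      (((hW.inter hu1).inter hv1).inter hu2).inter hv2,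
      ⟨⟨⟨⟨heW, heu1⟩, hev1⟩, heu2⟩, hev2⟩, ?_, ?_, ?_⟩
    · intro x hx; exact hx.1.1.1.1
    · intro a ha b hb; exact hsub1 ⟨ha.1.1.1.2, hb.1.1.2⟩
    · intro a ha b hb; exact hsub2 ⟨ha.1.2, hb.2⟩
  -- Build a decreasing sequence of open neighborhoods of e
  let g : ℕ → {W : Set G // IsOpen W ∧ e ∈ W} := fun n =>
    Nat.rec ⟨U, hU, heU⟩ (fun _ prev =>
      ⟨(key prev.1 prev.2.1 prev.2.2).choose,
       (key prev.1 prev.2.1 prev.2.2).choose_spec.1,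
       (key prev.1 prev.2.1 prev.2.2).choose_spec.2.1⟩) n
  have gsucc : ∀ n : ℕ, g (n + 1) =
      ⟨(key (g n).1 (g n).2.1 (g n).2.2).choose,
       (key (g n).1 (g n).2.1 (g n).2.2).choose_spec.1,
       (key (g n).1 (g n).2.1 (g n).2.2).choose_spec.2.1⟩ := fun n => rfl
  have gstep : ∀ n : ℕ,
      (∀ a ∈ (g (n+1)).1, ∀ b ∈ (g (n+1)).1, p (a, b) ∈ (g n).1) ∧
      (∀ a ∈ (g (n+1)).1, ∀ b ∈ (g (n+1)).1, q (a, b) ∈ (g n).1) := by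
    intro n
    have hs := (key (g n).1 (g n).2.1 (g n).2.2).choose_spec
    rw [gsucc n]
    exact ⟨hs.2.2.2.1, hs.2.2.2.2⟩
  set V : Set G := ⋂ n, (g n).1 with hV
  have hVopen : IsOpen V := hP _ (fun n => (g n).2.1)
  have heV : e ∈ V := Set.mem_iInter.mpr fun n => (g n).2.2
  have hVU : V ⊆ U := fun x hx => Set.mem_iInter.mp hx 0
  have hpV : ∀ a ∈ V, ∀ b ∈ V, p (a, b) ∈ V := by
    intro a ha b hb
    refine Set.mem_iInter.mpr fun n => ?_
    exact (gstep n).1 a (Set.mem_iInter.mp ha (n+1)) b (Set.mem_iInter.mp hb (n+1))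
  have hqV : ∀ a ∈ V, ∀ b ∈ V, q (a, b) ∈ V := by
    intro a ha b hb
    refine Set.mem_iInter.mpr fun n => ?_
    exact (gstep n).2 a (Set.mem_iInter.mp ha (n+1)) b (Set.mem_iInter.mp hb (n+1))
  have hVclosed : IsClosed V := by
    rw [← closure_subset_iff_isClosed]
    intro x hx
    have hO : IsOpen ((fun y => q (y, x)) ⁻¹' V) :=
      hVopen.preimage (hq.comp (continuous_id.prodMk continuous_const))
    have hxO : x ∈ (fun y => q (y, x)) ⁻¹' V := by
      simp only [Set.mem_preimage, hqe x]; exact heV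
    obtain ⟨h, hhO, hhV⟩ := mem_closure_iff.mp hx _ hO hxO
    have : p (h, q (h, x)) ∈ V := hpV h hhV _ hhO
    rwa [hpq h x] at this
  exact ⟨V, hVopen, hVclosed, heV, hVU, hpV, hqV⟩
end

section
/- In a Hausdorff regular P-space (every Gδ-set is open), every countably compact subset is finite. -/
/-!
In a T₁ P-space every countable set is closed, being the complement of a countable intersection
of open co-singletons. On the other hand an infinite countably compact set `C` contains a countable
infinite set `B` with an accumulation point `a ∈ C`; but `B \ {a}` is closed, so its complement is
a neighbourhood of `a` meeting `B` only in `a`.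
-/

open Set Topology

theorem Set.Countable.isClosed_of_isOpen_iInter_nat {X : Type*} [TopologicalSpace X] [T1Space X]
    (hP : ∀ f : ℕ → Set X, (∀ n, IsOpen (f n)) → IsOpen (⋂ n, f n))
    {s : Set X} (hs : s.Countable) : IsClosed s := by
  rcases s.eq_empty_or_nonempty with rfl | hne
  · exact isClosed_empty
  obtain ⟨f, rfl⟩ := hs.exists_eq_range hne
  have hcompl : (range f)ᶜ = ⋂ n, {f n}ᶜ := by ext; simp [eq_comm]
  rw [← isOpen_compl_iff, hcompl]
  exact hP _ fun _ => isOpen_compl_singleton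

theorem IsCountablyCompact.finite_of_forall_countable_isClosed {E : Type*} [TopologicalSpace E]
    {A : Set E} (hA : IsCountablyCompact A) (hclosed : ∀ s : Set E, s.Countable → IsClosed s) :
    A.Finite := by
  by_contra hinf
  obtain ⟨B, hBA, hBcount, hBinf⟩ := Set.Infinite.exists_subset_countable_infinite hinf
  obtain ⟨a, -, hacc⟩ := hA.exists_accPt_of_infinite hBA hBinf
  have hnhds : (B \ {a})ᶜ ∈ 𝓝 a :=
    (hclosed _ (hBcount.mono sdiff_subset)).isOpen_compl.mem_nhds fun h => h.2 rfl
  obtain ⟨y, ⟨hyU, hyB⟩, hya⟩ := accPt_iff_nhds.1 hacc _ hnhds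
  exact hyU ⟨hyB, hya⟩

theorem P_space_countably_compact_finite_general
    {X : Type*} [TopologicalSpace X] [T2Space X]
    (hP : ∀ f : ℕ → Set X, (∀ n, IsOpen (f n)) → IsOpen (⋂ n, f n))
    (C : Set X)
    (hC : ∀ U : ℕ → Set X, (∀ n, IsOpen (U n)) → C ⊆ ⋃ n, U n →
        ∃ t : Finset ℕ, C ⊆ ⋃ n ∈ t, U n) :
    C.Finite :=
  (isCountablyCompact_iff_countable_open_cover.2 hC).finite_of_forall_countable_isClosed
    fun _ hs => hs.isClosed_of_isOpen_iInter_nat hP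

/-- In a Hausdorff regular P-space (countable intersections of open sets are
open), every countably compact subset is finite. -/
theorem P_space_countably_compact_finite
    {X : Type*} [TopologicalSpace X] [T2Space X] [RegularSpace X]
    (hP : ∀ f : ℕ → Set X, (∀ n, IsOpen (f n)) → IsOpen (⋂ n, f n))
    (C : Set X)
    (hC : ∀ U : ℕ → Set X, (∀ n, IsOpen (U n)) → C ⊆ ⋃ n, U n →
        ∃ t : Finset ℕ, C ⊆ ⋃ n ∈ t, U n) :
    C.Finite :=
  P_space_countably_compact_finite_general hP C hC
end

section
/- Let X be a Lindelöf space such that every point of X has an open neighborhood with a point-countable p-metabase. Then X itself has a point-countable p-metabase. -/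
/-!
By the Lindelöf property `X` has a countable open cover by sets `V i` carrying point-countable
p-metabases `A i`. The sets `V i` together with all members of all `A i`, viewed as subsets of
`X`, form a countable union of point-countable families, hence a point-countable family. It is a
p-metabase: given `x ≠ y`, pick `V i ∋ x`; if `y ∈ V i`, a finite subfamily of `A i` separating
`x` from `y` inside `V i` still does so in `X` because `V i` is open, and otherwise `V i` itself
separates them.
-/

/-- `A` is a p-metabase for `X` if for any distinct `x, y` there is a finite
subfamily `F ⊆ A` with `x ∈ interior (⋃ F) ⊆ ⋃ F ⊆ X \ {y}`. -/
def IsPMetabase (X : Type*) [TopologicalSpace X] (A : Set (Set X)) : Prop :=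
  ∀ x y : X, x ≠ y → ∃ F : Finset (Set X), ↑F ⊆ A ∧
    x ∈ interior (⋃₀ (↑F : Set (Set X))) ∧ ⋃₀ (↑F : Set (Set X)) ⊆ {y}ᶜ

/-- `A` is point-countable if every point lies in only countably many members. -/
def PointCountable {X : Type*} (A : Set (Set X)) : Prop :=
  ∀ x : X, {U ∈ A | x ∈ U}.Countable

open Set

namespace PointCountable

variable {α β : Type*}

theorem of_countable {A : Set (Set α)} (hA : A.Countable) : PointCountable A :=
  fun _ => hA.mono (sep_subset _ _)

theorem union {A B : Set (Set α)} (hA : PointCountable A) (hB : PointCountable B) :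
    PointCountable (A ∪ B) :=
  fun x => ((hA x).union (hB x)).mono fun _ ⟨hU, hx⟩ => hU.imp (⟨·, hx⟩) (⟨·, hx⟩)

theorem iUnion {ι : Sort*} [Countable ι] {A : ι → Set (Set α)}
    (hA : ∀ i, PointCountable (A i)) : PointCountable (⋃ i, A i) := by
  intro x
  refine (countable_iUnion fun i => hA i x).mono ?_
  rintro U ⟨hU, hx⟩
  obtain ⟨i, hi⟩ := mem_iUnion.1 hU
  exact mem_iUnion.2 ⟨i, hi, hx⟩

theorem image_image {A : Set (Set α)} (hA : PointCountable A) {f : α → β}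
    (hf : f.Injective) : PointCountable ((f '' ·) '' A) := by
  intro z
  have hsub : {U ∈ (f '' ·) '' A | z ∈ U} ⊆ ⋃ a ∈ f ⁻¹' {z}, (f '' ·) '' {B ∈ A | a ∈ B} := by
    rintro _ ⟨⟨B, hB, rfl⟩, a, ha, rfl⟩
    exact mem_biUnion (mem_preimage.2 rfl) ⟨B, ⟨hB, ha⟩, rfl⟩
  refine Countable.mono hsub (Countable.biUnion ?_ fun a _ => (hA a).image _)
  exact (subsingleton_singleton.preimage hf).countable

end PointCountable

def FinitelySeparates {X : Type*} [TopologicalSpace X] (A : Set (Set X)) (x y : X) : Prop :=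
  ∃ F : Finset (Set X), ↑F ⊆ A ∧
    x ∈ interior (⋃₀ (↑F : Set (Set X))) ∧ ⋃₀ (↑F : Set (Set X)) ⊆ {y}ᶜ

namespace FinitelySeparates

variable {X Y : Type*} [TopologicalSpace X] [TopologicalSpace Y]

theorem mono {A B : Set (Set X)} {x y : X} (h : FinitelySeparates A x y) (hAB : A ⊆ B) :
    FinitelySeparates B x y :=
  let ⟨F, hFA, hx, hy⟩ := h
  ⟨F, hFA.trans hAB, hx, hy⟩

theorem of_isOpen_mem {A : Set (Set X)} {U : Set X} {x y : X} (hU : IsOpen U) (hUA : U ∈ A)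
    (hx : x ∈ U) (hy : y ∉ U) : FinitelySeparates A x y :=
  ⟨{U}, by simpa using hUA, by simpa [hU.interior_eq] using hx,
    by simpa using hy⟩

theorem image_image {A : Set (Set X)} {x y : X}
    (h : FinitelySeparates A x y) {f : X → Y} (hf : Topology.IsOpenEmbedding f) :
    FinitelySeparates ((f '' ·) '' A) (f x) (f y) := by
  classical
  obtain ⟨F, hFA, hx, hy⟩ := h
  have hunion : ⋃₀ (↑(F.image (f '' ·)) : Set (Set Y)) = f '' ⋃₀ (↑F : Set (Set X)) := by
    rw [Finset.coe_image, image_sUnion]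
  refine ⟨F.image (f '' ·), ?_, ?_, ?_⟩
  · rw [Finset.coe_image]
    exact image_mono hFA
  · rw [hunion]
    exact hf.isOpenMap.image_interior_subset _ (mem_image_of_mem f hx)
  · rw [hunion]
    rintro _ ⟨a, ha, rfl⟩ hfa
    exact hy ha (hf.injective hfa)

end FinitelySeparates

theorem isPMetabase_iff_finitelySeparates {X : Type*} [TopologicalSpace X] {A : Set (Set X)} :
    IsPMetabase X A ↔ ∀ x y, x ≠ y → FinitelySeparates A x y :=
  Iff.rfl

theorem exists_pointCountable_isPMetabase_of_iUnion_eq_univ {X ι : Type*} [TopologicalSpace X]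
    [Countable ι] {V : ι → Set X} (hVo : ∀ i, IsOpen (V i)) (hVcov : ⋃ i, V i = univ)
    {A : ∀ i, Set (Set (V i))} (hAc : ∀ i, PointCountable (A i))
    (hAm : ∀ i, IsPMetabase (V i) (A i)) :
    ∃ A : Set (Set X), PointCountable A ∧ IsPMetabase X A := by
  refine ⟨range V ∪ ⋃ i, (Subtype.val '' ·) '' A i, ?_, ?_⟩
  · exact (PointCountable.of_countable (countable_range V)).union
      (PointCountable.iUnion fun i => (hAc i).image_image Subtype.val_injective)
  rw [isPMetabase_iff_finitelySeparates]
  intro x y hxy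
  obtain ⟨i, hxi⟩ := mem_iUnion.1 (hVcov ▸ mem_univ x)
  by_cases hyi : y ∈ V i
  · have hsep := hAm i ⟨x, hxi⟩ ⟨y, hyi⟩ (fun h => hxy (congrArg Subtype.val h))
    exact ((FinitelySeparates.image_image hsep (hVo i).isOpenEmbedding_subtypeVal).mono
      fun _ hU => Or.inr (mem_iUnion.2 ⟨i, hU⟩))
  · exact .of_isOpen_mem (hVo i) (Or.inl (mem_range_self i)) hxi hyi

/-- A Lindelöf space in which every point has an open neighborhood carrying a
point-countable p-metabase (as a subspace) has itself a point-countable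
p-metabase. -/
theorem lindelof_locally_pmetabase
    {X : Type*} [TopologicalSpace X] [LindelofSpace X]
    (hloc : ∀ x : X, ∃ V : Set X, IsOpen V ∧ x ∈ V ∧
        ∃ A : Set (Set ↥V), PointCountable A ∧ IsPMetabase ↥V A) :
    ∃ A : Set (Set X), PointCountable A ∧ IsPMetabase X A := by
  choose V hVo hxV A hAc hAm using hloc
  obtain ⟨t, htc, htcov⟩ := countable_cover_nhds fun x => (hVo x).mem_nhds (hxV x)
  have : Countable t := htc.to_subtype
  exact exists_pointCountable_isPMetabase_of_iUnion_eq_univ (fun i : t => hVo i)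
    (by rwa [iUnion_subtype]) (fun i => hAc i) (fun i => hAm i)
end

section
/- Let bG be a compact Hausdorff space, G a dense subspace, Y = bG \ G also dense in bG, and let U₁, V₁ be open subsets of bG whose traces U = U₁ ∩ Y and V = V₁ ∩ Y have disjoint closures in Y. Then the set F = cl_{bG}(U₁) ∩ cl_{bG}(V₁) is a compact subset of bG contained in G, and F equals the intersection of the closures in G of W₁ = U₁ ∩ G and W₂ = V₁ ∩ G. -/
open Set

theorem IsOpen.closure_inter_dense {X : Type*} [TopologicalSpace X] {U D : Set X}
    (hU : IsOpen U) (hD : Dense D) : closure (U ∩ D) = closure U :=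
  (closure_mono inter_subset_left).antisymm
    (closure_minimal (hD.open_subset_closure_inter hU) isClosed_closure)

theorem closure_inter_closure_subset_compl_of_disjoint {X : Type*} [TopologicalSpace X]
    {U V Y : Set X} (hU : IsOpen U) (hV : IsOpen V) (hY : Dense Y)
    (hdisj : Disjoint (closure (U ∩ Y) ∩ Y) (closure (V ∩ Y) ∩ Y)) :
    closure U ∩ closure V ⊆ Yᶜ := by
  rintro x ⟨hxU, hxV⟩ hxY
  rw [← hU.closure_inter_dense hY] at hxU
  rw [← hV.closure_inter_dense hY] at hxV
  exact disjoint_left.mp hdisj ⟨hxU, hxY⟩ ⟨hxV, hxY⟩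

theorem closure_intersection_in_dense_part_general
    {B : Type*} [TopologicalSpace B] [CompactSpace B]
    (G : Set B) (hG : Dense G) (hY : Dense Gᶜ)
    (U₁ V₁ : Set B) (hU₁ : IsOpen U₁) (hV₁ : IsOpen V₁)
    (hdisj : Disjoint (closure (U₁ ∩ Gᶜ) ∩ Gᶜ) (closure (V₁ ∩ Gᶜ) ∩ Gᶜ)) :
    IsCompact (closure U₁ ∩ closure V₁) ∧
    closure U₁ ∩ closure V₁ ⊆ G ∧
    closure U₁ ∩ closure V₁ =
      (closure (U₁ ∩ G) ∩ G) ∩ (closure (V₁ ∩ G) ∩ G) := by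
  have hsubG : closure U₁ ∩ closure V₁ ⊆ G := by
    simpa using closure_inter_closure_subset_compl_of_disjoint hU₁ hV₁ hY hdisj
  refine ⟨(isClosed_closure.inter isClosed_closure).isCompact, hsubG, ?_⟩
  rw [hU₁.closure_inter_dense hG, hV₁.closure_inter_dense hG, inter_inter_inter_comm,
    inter_self, inter_eq_left.mpr hsubG]

/-- Let `bG` be compact Hausdorff, `G` a dense subspace with dense remainder
`Y = bG \ G`, and let `U₁, V₁` be open in `bG` such that the traces
`U = U₁ ∩ Y` and `V = V₁ ∩ Y` have disjoint closures in `Y`. Then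
`F = cl(U₁) ∩ cl(V₁)` is a compact subset of `bG` contained in `G`, and `F`
is the intersection of the closures in `G` of `W₁ = U₁ ∩ G` and
`W₂ = V₁ ∩ G`. -/
theorem closure_intersection_in_dense_part
    {B : Type*} [TopologicalSpace B] [CompactSpace B] [T2Space B]
    (G : Set B) (hG : Dense G) (hY : Dense Gᶜ)
    (U₁ V₁ : Set B) (hU₁ : IsOpen U₁) (hV₁ : IsOpen V₁)
    (hdisj : Disjoint (closure (U₁ ∩ Gᶜ) ∩ Gᶜ) (closure (V₁ ∩ Gᶜ) ∩ Gᶜ)) :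
    IsCompact (closure U₁ ∩ closure V₁) ∧
    closure U₁ ∩ closure V₁ ⊆ G ∧
    closure U₁ ∩ closure V₁ =
      (closure (U₁ ∩ G) ∩ G) ∩ (closure (V₁ ∩ G) ∩ G) :=
  closure_intersection_in_dense_part_general G hG hY U₁ V₁ hU₁ hV₁ hdisj
end
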